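/- arXiv:1606.02763 — 6 statements merged into one kernel-verified Lean document; each statement's English description precedes it below -/
import Mathlib

section
/- Let X be a finite set, let Δ = {(x,x) : x ∈ X}, let S ⊆ X × X with S ∩ Δ = ∅, and let f : X × X → ℝ (only its values on S are relevant). Suppose that for every n ≥ 2 and every sequence x₀, x₁, …, x_{n-1} of elements of X such that for each i ∈ {0,…,n-2} the pairs (x_i, x_{(i-1) mod n}) and (x_i, x_{(i+1) mod n}) lie in S and f(x_i, x_{(i-1) mod n}) > f(x_i, x_{(i+1) mod n}), and such that (x_{n-1}, x_{n-2}) ∈ S and (x_{n-1}, x₀) ∈ S, one has f(x_{n-1}, x_{n-2}) ≤ f(x_{n-1}, x₀). Then there exists a metric d on X such that for all x, y, z ∈ X with (x,y) ∈ S and (x,z) ∈ S, f(x,y) > f(x,z) implies d(x,y) < d(x,z). -/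
private def PairRel {X : Type*} (S : Set (X × X)) (f : X × X → ℝ) : (X × X) → (X × X) → Prop :=
  fun a b => ∃ x y z : X, (a = (x, y) ∨ a = (y, x)) ∧ (b = (x, z) ∨ b = (z, x)) ∧
    (x, y) ∈ S ∧ (x, z) ∈ S ∧ f (x, y) > f (x, z)

private lemma pairRel_swap {X : Type*} {S : Set (X × X)} {f : X × X → ℝ} {x y : X} {q : X × X}
    (h : PairRel S f (x, y) q) : PairRel S f (y, x) q := by
  obtain ⟨a, b, c, h1, h2, h3, h4, h5⟩ := h
  refine ⟨a, b, c, ?_, h2, h3, h4, h5⟩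
  rcases h1 with h1 | h1 <;> simp only [Prod.mk.injEq] at h1 ⊢ <;> tauto

private lemma transGen_swap {X : Type*} {S : Set (X × X)} {f : X × X → ℝ} {x y : X} {q : X × X}
    (h : Relation.TransGen (PairRel S f) (x, y) q) :
    Relation.TransGen (PairRel S f) (y, x) q := by
  induction h with
  | single h => exact .single (pairRel_swap h)
  | tail _ h ih => exact .tail ih h

private lemma mod_aux1 {n i : ℕ} (hn : 1 ≤ n) (hi : i < n) : ((i + n - 1) % n + 1) % n = i := by
  rcases Nat.eq_zero_or_pos i with rfl | hpos
  · rw [Nat.zero_add, Nat.mod_eq_of_lt (by omega : n - 1 < n), (by omega : n - 1 + 1 = n),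
      Nat.mod_self]
  · rw [(by omega : i + n - 1 = (i - 1) + n), Nat.add_mod_right,
      Nat.mod_eq_of_lt (by omega : i - 1 < n), (by omega : i - 1 + 1 = i),
      Nat.mod_eq_of_lt hi]


private lemma no_genCycle {X : Type*}
    (S : Set (X × X)) (hS : ∀ x : X, (x, x) ∉ S)
    (f : X × X → ℝ)
    (hcyc : ∀ (n : ℕ), 2 ≤ n → ∀ x : ℕ → X,
      (∀ i ∈ Finset.range (n - 1),
        (x i, x ((i + n - 1) % n)) ∈ S ∧
        (x i, x ((i + 1) % n)) ∈ S ∧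
        f (x i, x ((i + n - 1) % n)) > f (x i, x ((i + 1) % n))) →
      (x (n - 1), x (n - 2)) ∈ S →
      (x (n - 1), x 0) ∈ S →
      f (x (n - 1), x (n - 2)) ≤ f (x (n - 1), x 0)) :
    ∀ n, 1 ≤ n → ∀ x y z : ℕ → X,
      (∀ i < n, (x i, y i) ∈ S ∧ (x i, z i) ∈ S ∧ f (x i, y i) > f (x i, z i)) →
      (∀ i < n, (x ((i + 1) % n), y ((i + 1) % n)) = (x i, z i) ∨
                (x ((i + 1) % n), y ((i + 1) % n)) = (z i, x i)) →
      False := by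
  intro n
  induction n using Nat.strong_induction_on with
  | _ n ih =>
  intro hn x y z htri hlink
  rcases eq_or_lt_of_le hn with h1 | h2
  · -- n = 1
    have hn1 : n = 1 := h1.symm
    subst hn1
    have hl := hlink 0 (by omega)
    simp only [Nat.mod_self, Prod.mk.injEq] at hl
    obtain ⟨t1, t2, t3⟩ := htri 0 (by omega)
    rcases hl with ⟨-, h⟩ | ⟨h, -⟩
    · rw [h] at t3; exact lt_irrefl _ t3
    · rw [← h] at t2; exact hS _ t2
  · -- n ≥ 2
    by_cases hdeg : ∃ i, i < n ∧ (x ((i + 1) % n), y ((i + 1) % n)) = (x i, z i)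
    · -- degenerate link: merge and use induction
      obtain ⟨i₀, hi₀, hd⟩ := hdeg
      simp only [Prod.mk.injEq] at hd
      obtain ⟨hd1, hd2⟩ := hd
      refine ih (n - 1) (by omega) (by omega) (fun j => x ((j + i₀ + 1) % n))
        (fun j => if j = 0 then y i₀ else y ((j + i₀ + 1) % n))
        (fun j => z ((j + i₀ + 1) % n)) ?_ ?_
      · intro j hj
        by_cases hj0 : j = 0
        · subst hj0
          simp only [eq_self_iff_true, if_true, Nat.zero_add]
          obtain ⟨t1, t2, t3⟩ := htri i₀ hi₀
          obtain ⟨s1, s2, s3⟩ := htri ((i₀ + 1) % n) (Nat.mod_lt _ (by omega))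
          rw [hd1] at s2 s3
          rw [hd2] at s3
          rw [hd1]
          exact ⟨t1, s2, lt_trans s3 t3⟩
        · simp only [if_neg hj0]
          exact htri _ (Nat.mod_lt _ (by omega))
      · intro j hj
        by_cases hlast : j + 1 = n - 1
        · -- wrap-around link of the merged cycle
          have e0 : (j + 1) % (n - 1) = 0 := by rw [hlast, Nat.mod_self]
          simp only [e0, eq_self_iff_true, if_true, Nat.zero_add]
          rw [hd1]
          have ej : j + i₀ + 1 = i₀ + n - 1 := by omega
          rw [ej]
          have hlk := hlink ((i₀ + n - 1) % n) (Nat.mod_lt _ (by omega))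
          rwa [mod_aux1 (by omega) hi₀] at hlk
        · -- internal link
          have hj1 : (j + 1) % (n - 1) = j + 1 := Nat.mod_eq_of_lt (by omega)
          simp only [hj1, if_neg (Nat.succ_ne_zero j)]
          have hlk := hlink ((j + i₀ + 1) % n) (Nat.mod_lt _ (by omega))
          have e : ((j + i₀ + 1) % n + 1) % n = (j + 1 + i₀ + 1) % n := by
            conv_rhs => rw [(by omega : j + 1 + i₀ + 1 = (j + i₀ + 1) + 1), Nat.add_mod,
              Nat.mod_eq_of_lt (by omega : 1 < n)]
          rwa [e] at hlk
    · -- no degenerate link: an honest cycle, contradict hcyc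
      push_neg at hdeg
      have hsw : ∀ i < n, x ((i + 1) % n) = z i ∧ y ((i + 1) % n) = x i := by
        intro i hi
        rcases hlink i hi with h | h
        · exact absurd h (hdeg i hi)
        · simp only [Prod.mk.injEq] at h; exact h
      have hy : ∀ i < n, y i = x ((i + n - 1) % n) := by
        intro i hi
        have h2' := (hsw _ (Nat.mod_lt (i + n - 1) (by omega : 0 < n))).2
        rwa [mod_aux1 (by omega) hi] at h2'
      have hz : ∀ i < n, z i = x ((i + 1) % n) := fun i hi => ((hsw i hi).1).symm
      have hlt : n - 1 < n := by omega
      have e1 : (n - 1 + n - 1) % n = n - 2 := by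
        rw [(by omega : n - 1 + n - 1 = n + (n - 2)), Nat.add_mod_left,
          Nat.mod_eq_of_lt (by omega)]
      have e2 : (n - 1 + 1) % n = 0 := by rw [(by omega : n - 1 + 1 = n), Nat.mod_self]
      obtain ⟨t1, t2, t3⟩ := htri (n - 1) hlt
      rw [hy (n - 1) hlt, e1] at t1
      rw [hz (n - 1) hlt, e2] at t2
      rw [hy (n - 1) hlt, e1, hz (n - 1) hlt, e2] at t3
      have hle := hcyc n (by omega) x ?_ t1 t2
      · exact absurd hle (not_le.mpr t3)
      · intro i hi
        have hin : i < n - 1 := Finset.mem_range.mp hi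
        obtain ⟨u1, u2, u3⟩ := htri i (by omega)
        rw [hy i (by omega)] at u1
        rw [hz i (by omega)] at u2
        rw [hy i (by omega), hz i (by omega)] at u3
        exact ⟨u1, u2, u3⟩


private lemma exists_chain {X : Type*} {S : Set (X × X)} {f : X × X → ℝ} {a b : X × X}
    (h : Relation.TransGen (PairRel S f) a b) :
    ∃ n : ℕ, ∃ x y z : ℕ → X, 1 ≤ n ∧
      (∀ i < n, (x i, y i) ∈ S ∧ (x i, z i) ∈ S ∧ f (x i, y i) > f (x i, z i)) ∧
      (∀ i, i + 1 < n → (x (i + 1), y (i + 1)) = (x i, z i) ∨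
                        (x (i + 1), y (i + 1)) = (z i, x i)) ∧
      ((x 0, y 0) = a ∨ (y 0, x 0) = a) ∧
      ((x (n - 1), z (n - 1)) = b ∨ (z (n - 1), x (n - 1)) = b) := by
  induction h with
  | single hr =>
    obtain ⟨u, v, w, ha, hb, h3, h4, h5⟩ := hr
    refine ⟨1, fun _ => u, fun _ => v, fun _ => w, le_refl 1, ?_, ?_, ?_, ?_⟩
    · intro i _; exact ⟨h3, h4, h5⟩
    · intro i hi; omega
    · rcases ha with rfl | rfl
      · exact Or.inl rfl
      · exact Or.inr rfl
    · rcases hb with rfl | rfl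
      · exact Or.inl rfl
      · exact Or.inr rfl
  | tail hab hr ih =>
    obtain ⟨n, x, y, z, hn, htri, hlink, hea, heb⟩ := ih
    obtain ⟨u, v, w, hb', hc, h3, h4, h5⟩ := hr
    refine ⟨n + 1, fun i => if i < n then x i else u, fun i => if i < n then y i else v,
      fun i => if i < n then z i else w, by omega, ?_, ?_, ?_, ?_⟩
    · intro i hi
      by_cases h : i < n
      · simp only [if_pos h]; exact htri i h
      · simp only [if_neg h]; exact ⟨h3, h4, h5⟩
    · intro i hi
      by_cases h : i + 1 < n
      · have hi' : i < n := by omega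
        simp only [if_pos h, if_pos hi']
        exact hlink i h
      · have hi' : i < n := by omega
        have hieq : i = n - 1 := by omega
        simp only [if_neg h, if_pos hi']
        subst hieq
        rcases hb' with hb' | hb' <;> rcases heb with he | he
      -- he : (x (n-1), z (n-1)) = b or swap ; hb' : b = (u,v) or (v,u)
        · left; exact (he.trans hb').symm
        · right
          have h6 := he.trans hb'
          simp only [Prod.mk.injEq] at h6 ⊢
          exact ⟨h6.1.symm, h6.2.symm⟩
        · right
          have h6 := he.trans hb'
          simp only [Prod.mk.injEq] at h6 ⊢
          exact ⟨h6.2.symm, h6.1.symm⟩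
        · left
          have h6 := he.trans hb'
          simp only [Prod.mk.injEq] at h6 ⊢
          exact ⟨h6.2.symm, h6.1.symm⟩
    · simp only [if_pos (show 0 < n by omega)]; exact hea
    · simp only [Nat.add_sub_cancel, if_neg (lt_irrefl n)]
      rcases hc with rfl | rfl
      · exact Or.inl rfl
      · exact Or.inr rfl



/-- Let `X` be a finite set, `S ⊆ X × X` disjoint from the diagonal,
and `f : X × X → ℝ`. If for every `n ≥ 2` and every sequence `x₀, …, x_{n-1}` in `X`
such that for each `i ∈ {0, …, n-2}` the pairs `(x_i, x_{(i-1) mod n})` and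
`(x_i, x_{(i+1) mod n})` lie in `S` and `f(x_i, x_{(i-1) mod n}) > f(x_i, x_{(i+1) mod n})`,
and `(x_{n-1}, x_{n-2}) ∈ S`, `(x_{n-1}, x₀) ∈ S`, one has
`f(x_{n-1}, x_{n-2}) ≤ f(x_{n-1}, x₀)`, then there is a metric `d` on `X` such that
`f(x,y) > f(x,z)` implies `d(x,y) < d(x,z)` whenever `(x,y), (x,z) ∈ S`. -/
theorem compatible_metric_of_cycle_condition
    (X : Type*) [Fintype X]
    (S : Set (X × X)) (hS : ∀ x : X, (x, x) ∉ S)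
    (f : X × X → ℝ)
    (hcyc : ∀ (n : ℕ), 2 ≤ n → ∀ x : ℕ → X,
      (∀ i ∈ Finset.range (n - 1),
        (x i, x ((i + n - 1) % n)) ∈ S ∧
        (x i, x ((i + 1) % n)) ∈ S ∧
        f (x i, x ((i + n - 1) % n)) > f (x i, x ((i + 1) % n))) →
      (x (n - 1), x (n - 2)) ∈ S →
      (x (n - 1), x 0) ∈ S →
      f (x (n - 1), x (n - 2)) ≤ f (x (n - 1), x 0)) :
    ∃ d : X → X → ℝ,
      (∀ x y, 0 ≤ d x y) ∧
      (∀ x y, d x y = 0 ↔ x = y) ∧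
      (∀ x y, d x y = d y x) ∧
      (∀ x y z, d x z ≤ d x y + d y z) ∧
      (∀ x y z : X, (x, y) ∈ S → (x, z) ∈ S → f (x, y) > f (x, z) → d x y < d x z) := by
  classical
  have irr : ∀ p : X × X, ¬ Relation.TransGen (PairRel S f) p p := by
    intro p hp
    obtain ⟨n, x, y, z, hn, htri, hlink, hea, heb⟩ := exists_chain hp
    refine no_genCycle S hS f hcyc n hn x y z htri ?_
    intro i hi
    by_cases h' : i + 1 < n
    · rw [Nat.mod_eq_of_lt h']; exact hlink i h'
    · have hieq : i = n - 1 := by omega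
      subst hieq
      rw [show (n - 1 + 1) % n = 0 by rw [show n - 1 + 1 = n by omega, Nat.mod_self]]
      rcases hea with h1 | h1 <;> rcases heb with h2 | h2
      · left; exact h1.trans h2.symm
      · right; exact h1.trans h2.symm
      · right
        have h3 := h1.trans h2.symm
        simp only [Prod.mk.injEq] at h3 ⊢
        exact ⟨h3.2, h3.1⟩
      · left
        have h3 := h1.trans h2.symm
        simp only [Prod.mk.injEq] at h3 ⊢
        exact ⟨h3.2, h3.1⟩
  set g : X × X → ℕ := fun p => Set.ncard {q | Relation.TransGen (PairRel S f) p q} with hg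
  have gswap : ∀ u v : X, g (u, v) = g (v, u) := by
    intro u v
    have hset : {q | Relation.TransGen (PairRel S f) (u, v) q}
        = {q | Relation.TransGen (PairRel S f) (v, u) q} := by
      ext q
      exact ⟨fun h => transGen_swap h, fun h => transGen_swap h⟩
    simp only [hg]
    rw [hset]
  have gmono : ∀ u v w : X, (u, v) ∈ S → (u, w) ∈ S → f (u, v) > f (u, w) →
      g (u, w) < g (u, v) := by
    intro u v w h1 h2 h3
    have hrel : PairRel S f (u, v) (u, w) := ⟨u, v, w, Or.inl rfl, Or.inl rfl, h1, h2, h3⟩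
    apply Set.ncard_lt_ncard
    · constructor
      · intro q hq; exact Relation.TransGen.head hrel hq
      · intro hsub
        exact irr (u, w) (hsub (Relation.TransGen.single hrel))
    · exact Set.toFinite _
  have gbound : ∀ p : X × X, g p ≤ Fintype.card (X × X) := by
    intro p
    calc g p ≤ (Set.univ : Set (X × X)).ncard :=
          Set.ncard_le_ncard (Set.subset_univ _) Set.finite_univ
    _ = _ := by rw [Set.ncard_univ, Nat.card_eq_fintype_card]
  set N : ℕ := Fintype.card (X × X) with hN
  have hNpos : (0 : ℝ) < (N : ℝ) + 1 := by positivity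
  have hfrac1 : ∀ p : X × X, (g p : ℝ) / ((N : ℝ) + 1) ≤ 1 := by
    intro p
    rw [div_le_one hNpos]
    have : (g p : ℝ) ≤ (N : ℝ) := Nat.cast_le.mpr (gbound p)
    linarith
  have hfrac0 : ∀ p : X × X, 0 ≤ (g p : ℝ) / ((N : ℝ) + 1) := by
    intro p; positivity
  set d : X → X → ℝ := fun u v => if u = v then 0 else 2 - (g (u, v) : ℝ) / ((N : ℝ) + 1)
    with hd
  have hd_self : ∀ u : X, d u u = 0 := by intro u; simp [hd]
  have hd_ne : ∀ u v : X, u ≠ v → d u v = 2 - (g (u, v) : ℝ) / ((N : ℝ) + 1) := by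
    intro u v h; simp [hd, h]
  have hd_low : ∀ u v : X, u ≠ v → 1 ≤ d u v := by
    intro u v h
    rw [hd_ne u v h]
    have := hfrac1 (u, v)
    linarith
  have hd_hi : ∀ u v : X, d u v ≤ 2 := by
    intro u v
    by_cases h : u = v
    · rw [h, hd_self]; norm_num
    · rw [hd_ne u v h]
      have := hfrac0 (u, v)
      linarith
  have hd0 : ∀ u v : X, 0 ≤ d u v := by
    intro u v
    by_cases h : u = v
    · rw [h, hd_self]
    · linarith [hd_low u v h]
  refine ⟨d, hd0, ?_, ?_, ?_, ?_⟩
  · intro u v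
    constructor
    · intro h
      by_contra hne
      have := hd_low u v hne
      rw [h] at this
      linarith
    · intro h; rw [h, hd_self]
  · intro u v
    by_cases h : u = v
    · rw [h]
    · rw [hd_ne u v h, hd_ne v u (Ne.symm h), gswap]
  · intro u v w
    by_cases huw : u = w
    · rw [huw, hd_self]
      exact add_nonneg (hd0 _ _) (hd0 _ _)
    · by_cases huv : u = v
      · rw [← huv, hd_self, zero_add, huv]
      · by_cases hvw : v = w
        · rw [hvw, hd_self, add_zero]
        · have := hd_low u v huv
          have := hd_low v w hvw
          have := hd_hi u w
          linarith
  · intro u v w hv hw hf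
    have huv : u ≠ v := by
      intro h; rw [← h] at hv; exact hS u hv
    have huw : u ≠ w := by
      intro h; rw [← h] at hw; exact hS u hw
    have hlt : (g (u, w) : ℝ) < (g (u, v) : ℝ) := Nat.cast_lt.mpr (gmono u v w hv hw hf)
    rw [hd_ne u v huv, hd_ne u w huw]
    have hdiv : (g (u, w) : ℝ) / ((N : ℝ) + 1) < (g (u, v) : ℝ) / ((N : ℝ) + 1) := by
      gcongr
    linarith
end

section
/- Let X be a finite set and let e : X × X → ℝ be a semimetric, i.e. e(x,y) ≥ 0 for all x, y ∈ X, e(x,y) = 0 if and only if x = y, and e(x,y) = e(y,x) for all x, y ∈ X. Then there exists a metric d on X such that for all x, y, z ∈ X, d(x,y) < d(x,z) if and only if e(x,y) < e(x,z). -/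
/-- For a finite set `X` and a semimetric `e` on `X` (nonnegative,
vanishing exactly on the diagonal, symmetric), there is a metric `d` on `X` such that
`d(x,y) < d(x,z)` if and only if `e(x,y) < e(x,z)`. -/
theorem metric_of_semimetric_order_preserving
    (X : Type*) [Fintype X]
    (e : X → X → ℝ)
    (he_nonneg : ∀ x y, 0 ≤ e x y)
    (he_eq_zero : ∀ x y, e x y = 0 ↔ x = y)
    (he_symm : ∀ x y, e x y = e y x) :
    ∃ d : X → X → ℝ,
      (∀ x y, 0 ≤ d x y) ∧
      (∀ x y, d x y = 0 ↔ x = y) ∧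
      (∀ x y, d x y = d y x) ∧
      (∀ x y z, d x z ≤ d x y + d y z) ∧
      (∀ x y z : X, d x y < d x z ↔ e x y < e x z) := by
  by_cases hX : IsEmpty X
  · exact ⟨e, he_nonneg, he_eq_zero, he_symm,
      fun x => hX.elim x, fun x => hX.elim x⟩
  rw [not_isEmpty_iff] at hX
  obtain ⟨x₀⟩ := hX
  classical
  set M : ℝ := (Finset.univ : Finset (X × X)).sup' ⟨(x₀, x₀), Finset.mem_univ _⟩
      (fun p => e p.1 p.2) with hM
  have hMle : ∀ x y : X, e x y ≤ M := fun x y =>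
    Finset.le_sup' (f := fun p : X × X => e p.1 p.2) (Finset.mem_univ (x, y))
  have hM0 : (0:ℝ) ≤ M := le_trans (he_nonneg x₀ x₀) (hMle x₀ x₀)
  have hM1 : (0:ℝ) < M + 1 := by linarith
  set d : X → X → ℝ := fun x y => if x = y then 0 else 1 + e x y / (M + 1) with hd
  have hd1 : ∀ x y : X, x ≠ y → 1 ≤ d x y := by
    intro x y h
    have : 0 ≤ e x y / (M + 1) := div_nonneg (he_nonneg x y) (le_of_lt hM1)
    simp only [hd, if_neg h]; linarith
  have hd2 : ∀ x y : X, d x y < 2 := by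
    intro x y
    by_cases h : x = y
    · simp [hd, h]
    · have : e x y / (M + 1) < 1 := by
        rw [div_lt_one hM1]; have := hMle x y; linarith
      simp only [hd, if_neg h]; linarith
  have hdnn : ∀ x y : X, 0 ≤ d x y := by
    intro x y
    by_cases h : x = y
    · simp [hd, h]
    · linarith [hd1 x y h]
  refine ⟨d, hdnn, ?_, ?_, ?_, ?_⟩
  · intro x y
    constructor
    · intro h
      by_contra hne
      have := hd1 x y hne
      linarith
    · intro h; simp [hd, h]
  · intro x y
    by_cases h : x = y
    · simp [hd, h]
    · have h' : y ≠ x := fun hh => h hh.symm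
      simp only [hd, if_neg h, if_neg h', he_symm x y]
  · intro x y z
    by_cases hxz : x = z
    · subst hxz
      have : d x x = 0 := by simp [hd]
      rw [this]; exact add_nonneg (hdnn x y) (hdnn y x)
    by_cases hxy : x = y
    · subst hxy
      have : d x x = 0 := by simp [hd]
      rw [this]; linarith
    by_cases hyz : y = z
    · subst hyz
      have : d y y = 0 := by simp [hd]
      rw [this]; linarith
    · have := hd1 x y hxy
      have := hd1 y z hyz
      have := hd2 x z
      linarith
  · intro x y z
    by_cases hxy : x = y <;> by_cases hxz : x = z
    · subst hxy; subst hxz; simp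
    · subst hxy
      have h1 : d x x = 0 := by simp [hd]
      have h2 : e x x = 0 := (he_eq_zero x x).2 rfl
      rw [h1, h2]
      constructor
      · intro _
        exact lt_of_le_of_ne (he_nonneg x z) (fun h => hxz ((he_eq_zero x z).1 h.symm))
      · intro _; linarith [hd1 x z hxz]
    · subst hxz
      have h1 : d x x = 0 := by simp [hd]
      have h2 : e x x = 0 := (he_eq_zero x x).2 rfl
      rw [h1, h2]
      constructor
      · intro h; linarith [hdnn x y]
      · intro h; linarith [he_nonneg x y]
    · simp only [hd, if_neg hxy, if_neg hxz]
      rw [add_lt_add_iff_left, div_lt_div_iff_of_pos_right hM1]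
end

section
/- Let m ≥ 1 and let p, q ∈ ℝ with 0 < p < 1 and 0 < q < 1, and let P be the word transition probability of the Binary Asymmetric Channel with crossover probabilities p, q on binary words of length m. Let n ≥ 2 and let x₀, x₁, …, x_{n-1} be binary words of length m such that P(x_i | x_{(i-1) mod n}) > P(x_i | x_{(i+1) mod n}) for every i ∈ {0, …, n-2} (indices taken modulo n, so the i = 0 condition reads P(x₀ | x_{n-1}) > P(x₀ | x₁)). Then P(x_{n-1} | x_{n-2}) < P(x_{n-1} | x₀). -/
/-- Single-symbol transition probability of the Binary Asymmetric Channel with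
crossover probabilities `p, q`: `bacSymb p q b b'` is the probability `P₁(b | b')`
of receiving `b` when `b'` was sent. -/
def bacSymb (p q : ℝ) (b b' : Bool) : ℝ :=
  match b', b with
  | false, false => 1 - p
  | false, true  => p
  | true,  false => q
  | true,  true  => 1 - q

/-- Word transition probability of the Binary Asymmetric Channel on binary words of
length `m`: `bacWord p q x y = P(x | y) = ∏_j P₁(x j | y j)`. -/
def bacWord (p q : ℝ) {m : ℕ} (x y : Fin m → Bool) : ℝ :=
  ∏ j : Fin m, bacSymb p q (x j) (y j)

/-- Auxiliary weight function for detailed balance. -/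
def bacH (p q : ℝ) {m : ℕ} (y : Fin m → Bool) : ℝ :=
  ∏ j : Fin m, (if y j then q else p)

lemma bacH_pos {p q : ℝ} (hp0 : 0 < p) (hq0 : 0 < q) {m : ℕ} (y : Fin m → Bool) :
    0 < bacH p q y := by
  refine Finset.prod_pos fun j _ => ?_
  by_cases h : y j <;> simp [h, hp0, hq0]

lemma bacWord_pos {p q : ℝ} (hp0 : 0 < p) (hp1 : p < 1) (hq0 : 0 < q) (hq1 : q < 1)
    {m : ℕ} (x y : Fin m → Bool) : 0 < bacWord p q x y := by
  refine Finset.prod_pos fun j _ => ?_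
  cases x j <;> cases y j <;> simp [bacSymb] <;> linarith

/-- Detailed balance identity for the BAC. -/
lemma bac_db (p q : ℝ) {m : ℕ} (x y : Fin m → Bool) :
    bacWord p q x y * bacH p q x = bacWord p q y x * bacH p q y := by
  unfold bacWord bacH
  rw [← Finset.prod_mul_distrib, ← Finset.prod_mul_distrib]
  refine Finset.prod_congr rfl fun j _ => ?_
  cases x j <;> cases y j <;> simp [bacSymb] <;> ring

/-- For the Binary Asymmetric Channel on words of length `m ≥ 1`
with crossover probabilities `0 < p < 1`, `0 < q < 1`: if `n ≥ 2` and
`x₀, …, x_{n-1}` are words with `P(x_i | x_{(i-1) mod n}) > P(x_i | x_{(i+1) mod n})`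
for every `i ∈ {0, …, n-2}`, then `P(x_{n-1} | x_{n-2}) < P(x_{n-1} | x₀)`. -/
theorem bac_cycle_condition
    (m : ℕ) (hm : 1 ≤ m) (p q : ℝ)
    (hp0 : 0 < p) (hp1 : p < 1) (hq0 : 0 < q) (hq1 : q < 1)
    (n : ℕ) (hn : 2 ≤ n) (x : ℕ → Fin m → Bool)
    (hchain : ∀ i ∈ Finset.range (n - 1),
      bacWord p q (x i) (x ((i + n - 1) % n)) > bacWord p q (x i) (x ((i + 1) % n))) :
    bacWord p q (x (n - 1)) (x (n - 2)) < bacWord p q (x (n - 1)) (x 0) := by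
  have hn0 : 0 < n := by omega
  set u : ℕ → ℝ := fun j =>
    bacH p q (x (j % n)) * bacWord p q (x (j % n)) (x ((j + 1) % n)) with hu
  have hper : ∀ j, u (j + n) = u j := by
    intro j
    simp only [hu]
    have h1 : (j + n) % n = j % n := Nat.add_mod_right j n
    have h2 : (j + n + 1) % n = (j + 1) % n := by
      have : j + n + 1 = (j + 1) + n := by ring
      rw [this, Nat.add_mod_right]
    rw [h1, h2]
  have key : ∀ i ∈ Finset.range (n - 1), u i < u (i + n - 1) := by
    intro i hi
    simp only [Finset.mem_range] at hi
    have hin : i < n := by omega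
    have h2 : i + n - 1 + 1 = i + n := by omega
    have h3 : (i + n) % n = i := by rw [Nat.add_mod_right]; exact Nat.mod_eq_of_lt hin
    have h4 : i % n = i := Nat.mod_eq_of_lt hin
    simp only [hu, h2, h3, h4]
    have hdb := bac_db p q (x ((i + n - 1) % n)) (x i)
    rw [mul_comm (bacH p q (x ((i + n - 1) % n)))]
    rw [hdb, mul_comm]
    exact mul_lt_mul_of_pos_right (hchain i (Finset.mem_range.mpr hi))
      (bacH_pos hp0 hq0 _)
  have chain : ∀ i, i < n - 1 → u i < u (n - 1) := by
    intro i
    induction i with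
    | zero =>
      intro hi
      have h0 := key 0 (Finset.mem_range.mpr hi)
      have : 0 + n - 1 = n - 1 := by omega
      rwa [this] at h0
    | succ i ih =>
      intro hi
      have h1 := key (i + 1) (Finset.mem_range.mpr hi)
      have h2 : i + 1 + n - 1 = i + n := by omega
      rw [h2, hper i] at h1
      exact lt_trans h1 (ih (by omega))
  have hfin := chain (n - 2) (by omega)
  have e1 : (n - 2) % n = n - 2 := Nat.mod_eq_of_lt (by omega)
  have e2 : (n - 2 + 1) % n = n - 1 := by
    have : n - 2 + 1 = n - 1 := by omega
    rw [this]; exact Nat.mod_eq_of_lt (by omega)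
  have e3 : (n - 1) % n = n - 1 := Nat.mod_eq_of_lt (by omega)
  have e4 : (n - 1 + 1) % n = 0 := by
    have : n - 1 + 1 = n := by omega
    rw [this, Nat.mod_self]
  simp only [hu, e1, e2, e3, e4] at hfin
  have hdb := bac_db p q (x (n - 2)) (x (n - 1))
  rw [mul_comm (bacH p q (x (n - 2))), hdb, mul_comm] at hfin
  exact lt_of_mul_lt_mul_left hfin (le_of_lt (bacH_pos hp0 hq0 _))
end

section
/- Let m ≥ 1 and let p, q ∈ ℝ with 0 < p < 1 and 0 < q < 1, and let P be the word transition probability of the Binary Asymmetric Channel with crossover probabilities p, q on binary words of length m. Then for every n ≥ 1 and every cyclic sequence x₀, x₁, …, x_{n-1} of binary words of length m, the product of backward transition probabilities equals the product of forward transition probabilities: ∏_{i=0}^{n-1} P(x_i | x_{(i-1) mod n}) = ∏_{i=0}^{n-1} P(x_i | x_{(i+1) mod n}). -/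
/-- For the Binary Asymmetric Channel on words of length `m ≥ 1`
and any cyclic sequence `x₀, …, x_{n-1}` (`n ≥ 1`) of words, the product of backward
transition probabilities equals the product of forward transition probabilities:
`∏ᵢ P(xᵢ | x_{i-1}) = ∏ᵢ P(xᵢ | x_{i+1})` (indices mod `n`). -/
theorem bac_cycle_product_eq
    (m : ℕ) (hm : 1 ≤ m) (p q : ℝ)
    (hp0 : 0 < p) (hp1 : p < 1) (hq0 : 0 < q) (hq1 : q < 1)
    (n : ℕ) (hn : 1 ≤ n) (x : ZMod n → Fin m → Bool) :
    haveI : NeZero n := ⟨by omega⟩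
    ∏ i : ZMod n, bacWord p q (x i) (x (i - 1)) =
      ∏ i : ZMod n, bacWord p q (x i) (x (i + 1)) := by
  haveI : NeZero n := ⟨by omega⟩
  set w : Bool → ℝ := fun b => if b then p else q with hw
  have hkey : ∀ b b' : Bool, bacSymb p q b b' * w b' = bacSymb p q b' b * w b := by
    intro b b'
    cases b <;> cases b' <;> simp [bacSymb, hw] <;> ring
  set W : ZMod n → ℝ := fun i => ∏ j : Fin m, w (x i j) with hW
  have hWpos : ∀ i, 0 < W i := by
    intro i
    refine Finset.prod_pos fun j _ => ?_
    cases x i j <;> simp [hw, hp0, hq0]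
  have hword : ∀ i : ZMod n,
      bacWord p q (x i) (x (i - 1)) * W (i - 1) =
        bacWord p q (x (i - 1)) (x i) * W i := by
    intro i
    simp only [bacWord, hW, ← Finset.prod_mul_distrib]
    exact Finset.prod_congr rfl fun j _ => hkey _ _
  have h1 : (∏ i : ZMod n, bacWord p q (x i) (x (i - 1))) * ∏ i : ZMod n, W (i - 1)
      = (∏ i : ZMod n, bacWord p q (x (i - 1)) (x i)) * ∏ i : ZMod n, W i := by
    rw [← Finset.prod_mul_distrib, ← Finset.prod_mul_distrib]
    exact Finset.prod_congr rfl fun i _ => hword i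
  have hWs : ∏ i : ZMod n, W (i - 1) = ∏ i : ZMod n, W i :=
    Fintype.prod_equiv (Equiv.subRight (1 : ZMod n)) _ _ (fun i => rfl)
  have h2 : (∏ i : ZMod n, bacWord p q (x i) (x (i + 1)))
      = ∏ i : ZMod n, bacWord p q (x (i - 1)) (x i) :=
    Fintype.prod_equiv (Equiv.addRight (1 : ZMod n)) _ _ (fun i => by
      simp [Equiv.coe_addRight, add_sub_cancel_right])
  rw [hWs] at h1
  have hWne : (∏ i : ZMod n, W i) ≠ 0 :=
    ne_of_gt (Finset.prod_pos fun i _ => hWpos i)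
  rw [h2]
  exact mul_right_cancel₀ hWne h1
end

section
/- Consider the channel on a three-element set X = {a, b, c} with conditional probabilities Pr(a|a) = Pr(b|b) = Pr(c|c) = 1/2, Pr(a|b) = Pr(a|c) = 1/4, Pr(b|a) = Pr(c|b) = 1/6, Pr(b|c) = Pr(c|a) = 1/3. Then there is no metric d on X such that for all x, y, z ∈ X, d(x,y) < d(x,z) if and only if Pr(x|y) > Pr(x|z). -/
/-- For the channel on the three-element set `X = {a, b, c}`
(modeled as `Fin 3` with `a = 0`, `b = 1`, `c = 2`) given by
`Pr(a|a) = Pr(b|b) = Pr(c|c) = 1/2`, `Pr(a|b) = Pr(a|c) = 1/4`,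
`Pr(b|a) = Pr(c|b) = 1/6`, `Pr(b|c) = Pr(c|a) = 1/3`
(`Pr x y` denotes `Pr(x|y)`), there is no metric `d` on `X` such that for all
`x, y, z`, `d(x,y) < d(x,z) ↔ Pr(x|y) > Pr(x|z)`. -/
theorem three_point_channel_no_strongly_matched_metric
    (Pr : Fin 3 → Fin 3 → ℝ)
    (haa : Pr 0 0 = 1/2) (hbb : Pr 1 1 = 1/2) (hcc : Pr 2 2 = 1/2)
    (hab : Pr 0 1 = 1/4) (hac : Pr 0 2 = 1/4)
    (hba : Pr 1 0 = 1/6) (hcb : Pr 2 1 = 1/6)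
    (hbc : Pr 1 2 = 1/3) (hca : Pr 2 0 = 1/3) :
    ¬ ∃ d : Fin 3 → Fin 3 → ℝ,
      (∀ x y, 0 ≤ d x y) ∧
      (∀ x y, d x y = 0 ↔ x = y) ∧
      (∀ x y, d x y = d y x) ∧
      (∀ x y z, d x z ≤ d x y + d y z) ∧
      (∀ x y z : Fin 3, d x y < d x z ↔ Pr x y > Pr x z) := by
  rintro ⟨d, -, -, hsym, -, hm⟩
  have h1 : ¬ d 0 1 < d 0 2 := by rw [hm]; simp [hab, hac]
  have h1' : ¬ d 0 2 < d 0 1 := by rw [hm]; simp [hab, hac]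
  have h2 : d 1 2 < d 1 0 := by rw [hm, hba, hbc]; norm_num
  have h3 : d 2 0 < d 2 1 := by rw [hm, hcb, hca]; norm_num
  have e1 := hsym 0 2
  have e2 := hsym 0 1
  have e3 := hsym 1 2
  push_neg at h1 h1'
  linarith
end

section
/- Consider the channel on a three-element set X = {a, b, c} with conditional probabilities Pr(a|a) = Pr(b|b) = Pr(c|c) = 1/2, Pr(a|b) = Pr(a|c) = 1/4, Pr(b|a) = Pr(c|b) = 1/6, Pr(b|c) = Pr(c|a) = 1/3. Then there exists a metric d on X such that for all x, y, z ∈ X, Pr(x|y) > Pr(x|z) implies d(x,y) < d(x,z). -/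
/-- For the channel on the three-element set `X = {a, b, c}`
(modeled as `Fin 3` with `a = 0`, `b = 1`, `c = 2`) given by
`Pr(a|a) = Pr(b|b) = Pr(c|c) = 1/2`, `Pr(a|b) = Pr(a|c) = 1/4`,
`Pr(b|a) = Pr(c|b) = 1/6`, `Pr(b|c) = Pr(c|a) = 1/3`
(`Pr x y` denotes `Pr(x|y)`), there exists a metric `d` on `X` such that for all
`x, y, z`, `Pr(x|y) > Pr(x|z)` implies `d(x,y) < d(x,z)`. -/
theorem three_point_channel_has_weakly_matched_metric
    (Pr : Fin 3 → Fin 3 → ℝ)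
    (haa : Pr 0 0 = 1/2) (hbb : Pr 1 1 = 1/2) (hcc : Pr 2 2 = 1/2)
    (hab : Pr 0 1 = 1/4) (hac : Pr 0 2 = 1/4)
    (hba : Pr 1 0 = 1/6) (hcb : Pr 2 1 = 1/6)
    (hbc : Pr 1 2 = 1/3) (hca : Pr 2 0 = 1/3) :
    ∃ d : Fin 3 → Fin 3 → ℝ,
      (∀ x y, 0 ≤ d x y) ∧
      (∀ x y, d x y = 0 ↔ x = y) ∧
      (∀ x y, d x y = d y x) ∧
      (∀ x y z, d x z ≤ d x y + d y z) ∧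
      (∀ x y z : Fin 3, Pr x y > Pr x z → d x y < d x z) := by
  refine ⟨fun x y => ![![(0:ℝ),3,1],![3,0,2],![1,2,0]] x y, ?_, ?_, ?_, ?_, ?_⟩
  · intro x y; fin_cases x <;> fin_cases y <;> norm_num
  · intro x y; fin_cases x <;> fin_cases y <;> norm_num <;> decide
  · intro x y; fin_cases x <;> fin_cases y <;> norm_num
  · intro x y z; fin_cases x <;> fin_cases y <;> fin_cases z <;> norm_num
  · intro x y z h
    fin_cases x <;> fin_cases y <;> fin_cases z <;>
      simp_all [haa, hbb, hcc, hab, hac, hba, hcb, hbc, hca] <;> norm_num <;> linarith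
end
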